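/- arXiv:0706.2530 — 3 statements merged into one kernel-verified Lean document; each statement's English description precedes it below -/
import Mathlib

section
/- Let (M, F_M, F_{M*}, Ψ, c) be a self-dual F-crystal of rank n over k, and let a₁ ≤ a₂ ≤ … ≤ a_n be its Hodge slopes, i.e. the unique integers 0 ≤ a₁ ≤ … ≤ a_n for which there exist W(k)-bases v₁, …, v_n and w₁, …, w_n of M with F_M(v_i) = p^{a_i}·w_i for all i. Then a_i + a_{n-i+1} = ν(c) for every i = 1, …, n, where ν is the p-adic valuation on W(k). -/
/-!
Let `G` and `H` be the Gram matrices `Ψ(vᵢ)(vⱼ)` and `Ψ(wᵢ)(wⱼ)`; both are invertible because `Ψ`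
is an isomorphism onto the dual. The relations `F_M^* ∘ F_{M*} = σ⁻¹(c)` and
`Ψ ∘ F_M = F_{M*} ∘ Ψ` give `Ψ(F x)(F y) = c · σ(Ψ(x)(y))`, hence `p^{aⱼ + aₗ} Hⱼₗ = c · σ(Gⱼₗ)`.
If `aᵢ + a_{n-i+1} < ν(c)`, then `p` divides the entries of `H` in the block `j ≤ i`, `l ≤ n-i+1`,
whose sides add up to more than `n`; every term of the Leibniz expansion of `det H` meets this
block, so `p ∣ det H`, which is absurd. The reverse inequality follows in the same way from the
block `j ≥ i`, `l ≥ n-i+1` of `σ(G)`.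
-/

/-- The "transpose" `F_M^* : M^* → M^*` of a `σ`-semilinear map `F : M → M`,
given by `F_M^*(φ) = σ⁻¹ ∘ φ ∘ F`. -/
noncomputable def transposeF {R : Type*} [CommRing R] (e : R ≃+* R)
    {M : Type*} [AddCommGroup M] [Module R M]
    (F : M →+ M) (hF : ∀ (a : R) (m : M), F (a • m) = e a • F m) :
    Module.Dual R M → Module.Dual R M := fun φ =>
  { toFun := fun x => e.symm (φ (F x))
    map_add' := fun x y => by simp [map_add]
    map_smul' := fun a x => by
      simp only [hF, map_smul, smul_eq_mul, map_mul, RingEquiv.symm_apply_apply,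
        RingHom.id_apply] }

theorem Matrix.dvd_det_of_dvd_of_card_lt {ι R : Type*} [Fintype ι] [DecidableEq ι] [CommRing R]
    {q : R} (A : Matrix ι ι R) (S T : Finset ι) (hcard : Fintype.card ι < S.card + T.card)
    (hdvd : ∀ i ∈ S, ∀ j ∈ T, q ∣ A i j) : q ∣ A.det := by
  rw [Matrix.det_apply']
  refine Finset.dvd_sum fun σ _ => ?_
  obtain ⟨i, hi⟩ := Finset.inter_nonempty_of_card_lt_card_add_card (Finset.subset_univ S)
    (Finset.subset_univ (T.map σ.toEmbedding)) (by simpa using hcard)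
  obtain ⟨hiS, j, hjT, rfl⟩ := by simpa only [Finset.mem_inter, Finset.mem_map] using hi
  exact ((hdvd _ hiS j hjT).trans
    (Finset.dvd_prod_of_mem (fun i => A (σ i) i) (Finset.mem_univ j))).mul_left _

theorem Matrix.le_add_rev_of_isUnit_det {R : Type*} [CommRing R] {π : R} (hπ : ¬IsUnit π) {n : ℕ}
    {A : Matrix (Fin n) (Fin n) R} (hA : IsUnit A.det) {a : Fin n → ℕ} (ha : Monotone a) {m : ℕ}
    (hdvd : ∀ j l, a j + a l < m → π ∣ A j l) (i : Fin n) : m ≤ a i + a i.rev := by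
  by_contra! hlt
  refine hπ (isUnit_of_dvd_unit (A.dvd_det_of_dvd_of_card_lt (Finset.Iic i) (Finset.Iic i.rev)
    ?_ fun j hj l hl => hdvd j l ?_) hA)
  · simp only [Fintype.card_fin, Fin.card_Iic, Fin.val_rev]
    omega
  · exact (add_le_add (ha (Finset.mem_Iic.mp hj)) (ha (Finset.mem_Iic.mp hl))).trans_lt hlt

theorem Matrix.add_rev_le_of_isUnit_det {R : Type*} [CommRing R] {π : R} (hπ : ¬IsUnit π) {n : ℕ}
    {A : Matrix (Fin n) (Fin n) R} (hA : IsUnit A.det) {a : Fin n → ℕ} (ha : Monotone a) {m : ℕ}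
    (hdvd : ∀ j l, m < a j + a l → π ∣ A j l) (i : Fin n) : a i + a i.rev ≤ m := by
  by_contra! hgt
  refine hπ (isUnit_of_dvd_unit (A.dvd_det_of_dvd_of_card_lt (Finset.Ici i) (Finset.Ici i.rev)
    ?_ fun j hj l hl => hdvd j l ?_) hA)
  · simp only [Fintype.card_fin, Fin.card_Ici, Fin.val_rev]
    omega
  · exact hgt.trans_le (add_le_add (ha (Finset.mem_Ici.mp hj)) (ha (Finset.mem_Ici.mp hl)))

theorem dvd_of_pow_mul_eq_pow_mul {R : Type*} [CommMonoidWithZero R] [IsCancelMulZero R]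
    {π x y : R} {s t : ℕ} (hπ : π ≠ 0) (hst : s < t) (h : π ^ s * x = π ^ t * y) : π ∣ x := by
  have hx : x = π ^ (t - s) * y := mul_left_cancel₀ (pow_ne_zero s hπ) <| by
    rw [h, ← mul_assoc, ← pow_add, Nat.add_sub_cancel' hst.le]
  rw [hx]
  exact (dvd_pow_self π (Nat.sub_ne_zero_of_lt hst)).mul_right y

theorem LinearEquiv.isUnit_det_toMatrix₂ {R M ι : Type*} [CommRing R] [AddCommGroup M] [Module R M]
    [Fintype ι] [DecidableEq ι] (Ψ : M ≃ₗ[R] Module.Dual R M) (b : Module.Basis ι R M) :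
    IsUnit (LinearMap.toMatrix₂ b b (Ψ : M →ₗ[R] Module.Dual R M)).det := by
  have hT : LinearMap.toMatrix₂ b b (Ψ : M →ₗ[R] Module.Dual R M)
      = (LinearMap.toMatrix b b.dualBasis Ψ).transpose := by
    ext i j
    simp [LinearMap.toMatrix_apply]
  rw [hT, Matrix.det_transpose]
  exact Ψ.isUnit_det b b.dualBasis

theorem apply_map_apply_map_of_transposeF_eq_smul {R M : Type*} [CommRing R] [AddCommGroup M]
    [Module R M] (e : R ≃+* R) {F : M →+ M} (hF : ∀ (a : R) (x : M), F (a • x) = e a • F x)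
    {Fs : Module.Dual R M →+ Module.Dual R M} {c : R}
    (hrel : ∀ φ, transposeF e F hF (Fs φ) = e.symm c • φ)
    {Ψ : M →ₗ[R] Module.Dual R M} (hΨ : ∀ x, Ψ (F x) = Fs (Ψ x)) (x y : M) :
    Ψ (F x) (F y) = c * e (Ψ x y) := by
  have h : e.symm (Fs (Ψ x) (F y)) = e.symm c * Ψ x y := LinearMap.congr_fun (hrel (Ψ x)) y
  rw [hΨ, ← e.apply_symm_apply (Fs (Ψ x) (F y)), h, map_mul, e.apply_symm_apply]

theorem selfdual_Fcrystal_hodge_slopes_symmetry_general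
    (p : ℕ) [Fact p.Prime] (k : Type*) [Field k] [CharP k p] [PerfectRing k p]
    (n : ℕ)
    (M : Type*) [AddCommGroup M] [Module (WittVector p k) M]
    -- the self-dual `F`-crystal structure:
    (c : WittVector p k)
    (FM : M →+ M)
    (hFMsl : ∀ (a : WittVector p k) (m : M),
      FM (a • m) = WittVector.frobeniusEquiv p k a • FM m)
    (FMs : Module.Dual (WittVector p k) M →+ Module.Dual (WittVector p k) M)
    (hrel2 : ∀ φ, transposeF (WittVector.frobeniusEquiv p k) FM hFMsl (FMs φ)
      = (WittVector.frobeniusEquiv p k).symm c • φ)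
    (Ψ : M ≃ₗ[WittVector p k] Module.Dual (WittVector p k) M)
    (hΨ : ∀ m, Ψ (FM m) = FMs (Ψ m))
    -- the Hodge slopes `a₁ ≤ ⋯ ≤ a_n`:
    (a : Fin n → ℕ) (ha : Monotone a)
    (v w : Module.Basis (Fin n) (WittVector p k) M)
    (hvw : ∀ i, FM (v i) = ((p : WittVector p k) ^ (a i)) • w i)
    -- `ν(c) = m`, i.e. `c = p^m · u` with `u` a unit:
    (m : ℕ) (u : (WittVector p k)ˣ) (hcu : c = (p : WittVector p k) ^ m * u) :
    -- conclusion: `aᵢ + a_{n-i+1} = ν(c)` for all `i`: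
    ∀ i : Fin n, a i + a i.rev = m := by
  set σ := WittVector.frobeniusEquiv p k
  set G := LinearMap.toMatrix₂ v v (Ψ : M →ₗ[WittVector p k] Module.Dual (WittVector p k) M)
  set H := LinearMap.toMatrix₂ w w (Ψ : M →ₗ[WittVector p k] Module.Dual (WittVector p k) M)
  have hp := WittVector.irreducible p (k := k)
  have hGH : ∀ j l, (p : WittVector p k) ^ (a j + a l) * H j l = p ^ m * (u * σ (G j l)) := by
    intro j l
    have h := apply_map_apply_map_of_transposeF_eq_smul σ hFMsl hrel2 hΨ (v j) (v l)
    simp only [hvw, map_smul, LinearMap.smul_apply, smul_eq_mul, hcu] at h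
    simp only [G, H, LinearMap.toMatrix₂_apply, LinearEquiv.coe_coe, pow_add]
    linear_combination h
  have hσG : IsUnit ((σ : WittVector p k →+* WittVector p k).mapMatrix G).det := by
    rw [← RingHom.map_det]
    exact (Ψ.isUnit_det_toMatrix₂ v).map σ
  intro i
  refine le_antisymm ?_ ?_
  · refine Matrix.add_rev_le_of_isUnit_det hp.not_isUnit hσG ha (fun j l hlt => ?_) i
    exact (Units.dvd_mul_left ..).mp (dvd_of_pow_mul_eq_pow_mul hp.ne_zero hlt (hGH j l).symm)
  · exact Matrix.le_add_rev_of_isUnit_det hp.not_isUnit (Ψ.isUnit_det_toMatrix₂ w) ha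
      (fun j l hlt => dvd_of_pow_mul_eq_pow_mul hp.ne_zero hlt (hGH j l)) i

/-- Let `(M, F_M, F_{M*}, Ψ, c)` be a self-dual `F`-crystal of rank `n`
over a perfect field `k`, with Hodge slopes `a₁ ≤ ⋯ ≤ a_n` (i.e. there are `W(k)`-bases
`v₁, …, v_n` and `w₁, …, w_n` of `M` with `F_M(vᵢ) = p^{aᵢ}·wᵢ`).  Then
`aᵢ + a_{n-i+1} = ν(c)` for every `i`, where `ν` is the `p`-adic valuation on `W(k)`
(recorded as the exponent `m` in the factorization `c = p^m · u` with `u` a unit, which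
exists and is unique since `W(k)` is a discrete valuation ring with uniformizer `p`). -/
theorem selfdual_Fcrystal_hodge_slopes_symmetry
    (p : ℕ) [Fact p.Prime] (k : Type*) [Field k] [CharP k p] [PerfectRing k p]
    (n : ℕ)
    (M : Type*) [AddCommGroup M] [Module (WittVector p k) M]
    [Module.Free (WittVector p k) M] [Module.Finite (WittVector p k) M]
    -- the self-dual `F`-crystal structure:
    (c : WittVector p k) (hc : c ≠ 0)
    (FM : M →+ M)
    (hFMsl : ∀ (a : WittVector p k) (m : M),
      FM (a • m) = WittVector.frobeniusEquiv p k a • FM m)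
    (hFMinj : Function.Injective FM)
    (FMs : Module.Dual (WittVector p k) M →+ Module.Dual (WittVector p k) M)
    (hFMssl : ∀ (a : WittVector p k) (φ : Module.Dual (WittVector p k) M),
      FMs (a • φ) = WittVector.frobeniusEquiv p k a • FMs φ)
    (hFMsinj : Function.Injective FMs)
    (hrel1 : ∀ φ, FMs (transposeF (WittVector.frobeniusEquiv p k) FM hFMsl φ) = c • φ)
    (hrel2 : ∀ φ, transposeF (WittVector.frobeniusEquiv p k) FM hFMsl (FMs φ)
      = (WittVector.frobeniusEquiv p k).symm c • φ)
    (Ψ : M ≃ₗ[WittVector p k] Module.Dual (WittVector p k) M)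
    (hΨ : ∀ m, Ψ (FM m) = FMs (Ψ m))
    -- the Hodge slopes `a₁ ≤ ⋯ ≤ a_n`:
    (a : Fin n → ℕ) (ha : Monotone a)
    (v w : Module.Basis (Fin n) (WittVector p k) M)
    (hvw : ∀ i, FM (v i) = ((p : WittVector p k) ^ (a i)) • w i)
    -- `ν(c) = m`, i.e. `c = p^m · u` with `u` a unit:
    (m : ℕ) (u : (WittVector p k)ˣ) (hcu : c = (p : WittVector p k) ^ m * u) :
    -- conclusion: `aᵢ + a_{n-i+1} = ν(c)` for all `i`:
    ∀ i : Fin n, a i + a i.rev = m :=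
  selfdual_Fcrystal_hodge_slopes_symmetry_general p k n M c FM hFMsl FMs hrel2 Ψ hΨ a ha v w hvw m u
    hcu
end

section
/- Let R be a commutative ring and M a finite free R-module of rank n. Let Ψ : M → M* = Hom_R(M, R) be an R-module isomorphism, and let M₁ ⊆ M₂ ⊆ M be submodules such that M₁ is free of rank A, M/M₂ is free of rank A, M/M₁ is free, and M₁ and M₂ are perpendicular under Ψ, i.e. Ψ(m₁)(m₂) = 0 and Ψ(m₂)(m₁) = 0 for all m₁ ∈ M₁ and m₂ ∈ M₂. Then Ψ(M₂) = {φ ∈ M* : φ(m₁) = 0 for all m₁ ∈ M₁}, i.e. the image of M₂ under Ψ is exactly the annihilator of M₁ in M*. -/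
/-- Let `R` be a commutative ring, `M` a finite free `R`-module of rank
`n`, `Ψ : M ≃ M*` an isomorphism, and `M₁ ⊆ M₂ ⊆ M` submodules with `M₁` free of rank `A`,
`M/M₂` free of rank `A`, `M/M₁` free, and `M₁ ⊥ M₂` under `Ψ`.  Then
`Ψ(M₂) = Ann(M₁) = {φ ∈ M* : φ(m₁) = 0 for all m₁ ∈ M₁}`. -/
theorem image_eq_dualAnnihilator
    (R : Type*) [CommRing R]
    (M : Type*) [AddCommGroup M] [Module R M]
    [Module.Free R M] [Module.Finite R M]
    (n A : ℕ) (hn : Module.finrank R M = n)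
    (Ψ : M ≃ₗ[R] Module.Dual R M)
    (M₁ M₂ : Submodule R M) (h12 : M₁ ≤ M₂)
    (hM₁free : Module.Free R M₁) (hM₁rank : Module.finrank R M₁ = A)
    (hQ₂free : Module.Free R (M ⧸ M₂)) (hQ₂rank : Module.finrank R (M ⧸ M₂) = A)
    (hQ₁free : Module.Free R (M ⧸ M₁))
    (hperp : ∀ m₁ ∈ M₁, ∀ m₂ ∈ M₂, Ψ m₁ m₂ = 0 ∧ Ψ m₂ m₁ = 0) :
    Submodule.map (Ψ : M →ₗ[R] Module.Dual R M) M₂ = M₁.dualAnnihilator := by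
  classical
  rcases subsingleton_or_nontrivial R with hR | hR
  · haveI := Module.subsingleton R M
    haveI : Subsingleton (Module.Dual R M) := ⟨fun a b => LinearMap.ext fun x => Subsingleton.elim _ _⟩
    exact Subsingleton.elim _ _
  -- splitting of M₁ ⊆ M
  obtain ⟨s, hs⟩ := Module.projective_lifting_property M₁.mkQ (LinearMap.id : (M ⧸ M₁) →ₗ[R] (M ⧸ M₁))
    (Submodule.mkQ_surjective M₁)
  set π : M →ₗ[R] M := LinearMap.id - s ∘ₗ M₁.mkQ with hπ
  have hπmem : ∀ x, π x ∈ M₁ := by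
    intro x
    rw [← Submodule.Quotient.mk_eq_zero, ← Submodule.mkQ_apply, ← LinearMap.comp_apply]
    have : M₁.mkQ ∘ₗ π = 0 := by
      rw [hπ, LinearMap.comp_sub, LinearMap.comp_id, ← LinearMap.comp_assoc, hs,
        LinearMap.id_comp, sub_self]
    rw [this]; rfl
  have hπid : ∀ x ∈ M₁, π x = x := by
    intro x hx
    have : M₁.mkQ x = 0 := by rwa [Submodule.mkQ_apply, Submodule.Quotient.mk_eq_zero]
    simp [hπ, this]
  set π' : M →ₗ[R] M₁ := π.codRestrict M₁ hπmem with hπ'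
  have hπ'surj : Function.Surjective π' := by
    intro y
    exact ⟨(y : M), Subtype.ext (hπid _ y.2)⟩
  haveI : Module.Finite R M₁ := Module.Finite.of_surjective π' hπ'surj
  -- the map f : M → Dual R M₁
  set f : M →ₗ[R] Module.Dual R M₁ := M₁.subtype.dualMap ∘ₗ (Ψ : M →ₗ[R] Module.Dual R M) with hf
  have hfsurj : Function.Surjective f := by
    intro ξ
    refine ⟨Ψ.symm (ξ ∘ₗ π'), ?_⟩
    ext m
    have hm : π' (m : M) = m := Subtype.ext (hπid _ m.2)
    simp [hf, LinearMap.dualMap_apply, hm]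
  set N : Submodule R M := LinearMap.ker f with hN
  have hmemN : ∀ x, x ∈ N ↔ ∀ m ∈ M₁, Ψ x m = 0 := by
    intro x
    constructor
    · intro hx m hm
      have := LinearMap.congr_fun (show f x = 0 from hx) ⟨m, hm⟩
      simpa [hf] using this
    · intro h
      refine LinearMap.ext fun m => ?_
      simpa [hf] using h m m.2
  have hM₂N : M₂ ≤ N := by
    intro x hx
    rw [hmemN]
    intro m hm
    exact (hperp m hm x hx).2
  -- N = M₂ via rank counting
  have hNM₂ : N ≤ M₂ := by
    -- equiv (M ⧸ N) ≃ Dual R M₁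
    have e1 : (M ⧸ N) ≃ₗ[R] Module.Dual R M₁ := f.quotKerEquivOfSurjective hfsurj
    -- finrank of Dual R M₁ = A
    have hdualrank : Module.finrank R (Module.Dual R M₁) = A := by
      let b := Module.Free.chooseBasis R M₁
      rw [Module.finrank_eq_card_basis b.dualBasis, ← Module.finrank_eq_card_basis b, hM₁rank]
    haveI : Module.Free R (M ⧸ N) := Module.Free.of_equiv e1.symm
    haveI : Module.Finite R (M ⧸ N) := Module.Finite.equiv e1.symm
    have hQNrank : Module.finrank R (M ⧸ N) = A := by rw [e1.finrank_eq, hdualrank]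
    -- equiv (M ⧸ N) ≃ (M ⧸ M₂)
    let b2 := Module.Free.chooseBasis R (M ⧸ M₂)
    let bN := Module.Free.chooseBasis R (M ⧸ N)
    have hcard : Fintype.card (Module.Free.ChooseBasisIndex R (M ⧸ N)) =
        Fintype.card (Module.Free.ChooseBasisIndex R (M ⧸ M₂)) := by
      rw [← Module.finrank_eq_card_chooseBasisIndex, ← Module.finrank_eq_card_chooseBasisIndex,
        hQNrank, hQ₂rank]
    let e2 : (M ⧸ N) ≃ₗ[R] (M ⧸ M₂) := bN.equiv b2 (Fintype.equivOfCardEq hcard)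
    -- surjection q : M ⧸ M₂ → M ⧸ N
    let q : (M ⧸ M₂) →ₗ[R] (M ⧸ N) := Submodule.mapQ M₂ N LinearMap.id hM₂N
    have hq : ∀ x : M, q (Submodule.Quotient.mk x) = Submodule.Quotient.mk x := fun x => by
      simp [q, Submodule.mapQ_apply]
    have hqsurj : Function.Surjective q := by
      intro y
      obtain ⟨x, rfl⟩ := Submodule.Quotient.mk_surjective N y
      exact ⟨Submodule.Quotient.mk x, hq x⟩
    set g : (M ⧸ M₂) →ₗ[R] (M ⧸ M₂) := e2.toLinearMap ∘ₗ q with hg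
    have hgsurj : Function.Surjective g := e2.surjective.comp hqsurj
    have hginj : Function.Injective g :=
      OrzechProperty.injective_of_surjective_endomorphism g hgsurj
    intro x hx
    have hx0 : q (Submodule.Quotient.mk x) = 0 := by
      rw [hq, Submodule.Quotient.mk_eq_zero]; exact hx
    have : g (Submodule.Quotient.mk x) = g 0 := by simp [hg, hx0]
    have := hginj this
    rwa [Submodule.Quotient.mk_eq_zero] at this
  have hNeq : N = M₂ := le_antisymm hNM₂ hM₂N
  -- conclude
  apply le_antisymm
  · rintro _ ⟨x, hx, rfl⟩
    rw [Submodule.mem_dualAnnihilator]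
    intro m hm
    exact (hperp m hm x hx).2
  · intro φ hφ
    rw [Submodule.mem_dualAnnihilator] at hφ
    have hmem : Ψ.symm φ ∈ M₂ := by
      rw [← hNeq, hmemN]
      intro m hm
      simpa using hφ m hm
    exact ⟨Ψ.symm φ, hmem, by simp⟩
end

section
/- Let R be a commutative ring and M a finite free R-module of rank n. Let Ψ : M → M* = Hom_R(M, R) be an R-module isomorphism, and let M₁ ⊆ M₂ ⊆ M be submodules such that M₁ is free of rank A, M/M₂ is free of rank A, M/M₁ is free, and M₁ and M₂ are perpendicular under Ψ, i.e. Ψ(m₁)(m₂) = 0 and Ψ(m₂)(m₁) = 0 for all m₁ ∈ M₁ and m₂ ∈ M₂. Then the map Ψ' : M/M₂ → M₁* = Hom_R(M₁, R) given by Ψ'(m + M₂) = Ψ(m)|_{M₁} is a well-defined R-module isomorphism; in particular M/M₂ ≅ M₁* and, dually, M₁ and M/M₂ are dual to each other. -/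
/-!
Restricting `Ψ m` to `M₁` kills `M₂` by perpendicularity, so it factors through `M ⧸ M₂`.
Since `M ⧸ M₁` is projective, `M₁` is a direct summand of `M`: every functional on `M₁`
extends to `M`, and `Ψ` is onto `M*`, so the factored map is surjective. It is then a
surjection between free modules of the same finite rank `A`, hence injective (Orzech).
-/

namespace Submodule

variable {R M : Type*} [Ring R] [AddCommGroup M] [Module R M]

theorem exists_retraction_of_projective_quotient (W : Submodule R M)
    [Module.Projective R (M ⧸ W)] : ∃ r : M →ₗ[R] W, ∀ x : W, r x = x := by
  obtain ⟨s, hs⟩ := W.mkQ.exists_rightInverse_of_surjective W.range_mkQ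
  have hs' : ∀ q, W.mkQ (s q) = q := fun q => congr($hs q)
  have mem : ∀ m, m - s (W.mkQ m) ∈ W := fun m => by
    rw [← Submodule.Quotient.mk_eq_zero, ← mkQ_apply, map_sub, hs', sub_self]
  refine ⟨(LinearMap.id - s ∘ₗ W.mkQ).codRestrict W mem, fun x => ?_⟩
  ext
  simp [(Submodule.Quotient.mk_eq_zero W).2 x.2]

theorem finite_of_projective_quotient [Module.Finite R M] (W : Submodule R M)
    [Module.Projective R (M ⧸ W)] : Module.Finite R W :=
  have ⟨r, hr⟩ := W.exists_retraction_of_projective_quotient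
  Module.Finite.of_surjective r fun x => ⟨x, hr x⟩

theorem dualRestrict_surjective_of_projective_quotient {R M : Type*} [CommRing R]
    [AddCommGroup M] [Module R M] (W : Submodule R M) [Module.Projective R (M ⧸ W)] : Function.Surjective W.dualRestrict := by
  obtain ⟨r, hr⟩ := W.exists_retraction_of_projective_quotient
  exact fun φ => ⟨φ ∘ₗ r, LinearMap.ext fun x => congrArg φ (hr x)⟩

end Submodule

theorem LinearMap.injective_of_surjective_of_finrank_eq {R M N : Type*} [CommRing R]
    [AddCommGroup M] [Module R M] [Module.Free R M] [Module.Finite R M]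
    [AddCommGroup N] [Module R N] [Module.Free R N] [Module.Finite R N]
    (f : M →ₗ[R] N) (hf : Function.Surjective f) (h : Module.finrank R M = Module.finrank R N) :
    Function.Injective f := by
  cases subsingleton_or_nontrivial R
  · have := Module.subsingleton R M
    exact Function.injective_of_subsingleton f
  · exact OrzechProperty.injective_of_surjective_of_injective
      (LinearEquiv.ofFinrankEq M N h).toLinearMap f (LinearEquiv.injective _) hf

theorem quotient_iso_dual_of_perp_general
    (R : Type*) [CommRing R]
    (M : Type*) [AddCommGroup M] [Module R M]
    [Module.Finite R M]
    (A : ℕ)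
    (Ψ : M ≃ₗ[R] Module.Dual R M)
    (M₁ M₂ : Submodule R M)
    (hM₁free : Module.Free R M₁) (hM₁rank : Module.finrank R M₁ = A)
    (hQ₂free : Module.Free R (M ⧸ M₂)) (hQ₂rank : Module.finrank R (M ⧸ M₂) = A)
    (hQ₁free : Module.Free R (M ⧸ M₁))
    (hperp : ∀ m₁ ∈ M₁, ∀ m₂ ∈ M₂, Ψ m₁ m₂ = 0 ∧ Ψ m₂ m₁ = 0) :
    ∃ Ψ' : (M ⧸ M₂) →ₗ[R] Module.Dual R M₁,
      (∀ (m : M) (x : M₁), Ψ' (Submodule.Quotient.mk m) x = Ψ m (x : M)) ∧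
      Function.Bijective Ψ' := by
  have := M₁.finite_of_projective_quotient
  let f : M →ₗ[R] Module.Dual R M₁ := M₁.dualRestrict ∘ₗ Ψ.toLinearMap
  have hker : M₂ ≤ LinearMap.ker f := fun m hm =>
    LinearMap.ext fun x => (hperp x x.2 m hm).2
  have hsurj : Function.Surjective (M₂.liftQ f hker) := by
    rw [← LinearMap.range_eq_top, Submodule.range_liftQ, LinearMap.range_eq_top]
    exact M₁.dualRestrict_surjective_of_projective_quotient.comp Ψ.surjective
  have hrank : Module.finrank R (M ⧸ M₂) = Module.finrank R (Module.Dual R M₁) := by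
    rw [hQ₂rank, ← hM₁rank, (Module.Free.chooseBasis R M₁).toDualEquiv.finrank_eq]
  exact ⟨M₂.liftQ f hker, fun _ _ => rfl,
    LinearMap.injective_of_surjective_of_finrank_eq _ hsurj hrank, hsurj⟩

/-- Let `R` be a commutative ring, `M` a finite free `R`-module of rank
`n`, `Ψ : M ≃ M*` an isomorphism, and `M₁ ⊆ M₂ ⊆ M` submodules with `M₁` free of rank `A`,
`M/M₂` free of rank `A`, `M/M₁` free, and `M₁ ⊥ M₂` under `Ψ`.  Then the map
`Ψ' : M/M₂ → M₁*`, `Ψ'(m + M₂) = Ψ(m)|_{M₁}`, is a well-defined `R`-module isomorphism;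
in particular `M/M₂ ≅ M₁*`, so `M₁` and `M/M₂` are dual to each other. -/
theorem quotient_iso_dual_of_perp
    (R : Type*) [CommRing R]
    (M : Type*) [AddCommGroup M] [Module R M]
    [Module.Free R M] [Module.Finite R M]
    (n A : ℕ) (hn : Module.finrank R M = n)
    (Ψ : M ≃ₗ[R] Module.Dual R M)
    (M₁ M₂ : Submodule R M) (h12 : M₁ ≤ M₂)
    (hM₁free : Module.Free R M₁) (hM₁rank : Module.finrank R M₁ = A)
    (hQ₂free : Module.Free R (M ⧸ M₂)) (hQ₂rank : Module.finrank R (M ⧸ M₂) = A)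
    (hQ₁free : Module.Free R (M ⧸ M₁))
    (hperp : ∀ m₁ ∈ M₁, ∀ m₂ ∈ M₂, Ψ m₁ m₂ = 0 ∧ Ψ m₂ m₁ = 0) :
    ∃ Ψ' : (M ⧸ M₂) →ₗ[R] Module.Dual R M₁,
      (∀ (m : M) (x : M₁), Ψ' (Submodule.Quotient.mk m) x = Ψ m (x : M)) ∧
      Function.Bijective Ψ' :=
  quotient_iso_dual_of_perp_general R M A Ψ M₁ M₂ hM₁free hM₁rank hQ₂free hQ₂rank hQ₁free hperp
end
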